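/- Let U be a viscous shock profile. Then U″(z) = (1−m)·U′(z)²/U(z) + (f′(U(z)) − s)·U(z)^{1−m}·U′(z) for all z ∈ ℝ, and there exists a constant C > 0 such that for all z ∈ ℝ: |U′(z)| ≤ C·U(z)^{2−m}, |U″(z)| ≤ C·U(z)^{3−2m}, |U‴(z)| ≤ C·U(z)^{4−3m}, and |U⁗(z)| ≤ C·U(z)^{5−4m}. -/

import Mathlib

open MeasureTheory Real Filter Topology Set

noncomputable section

/-- `n`-th partial derivative in the first (space) variable. -/
def dxn (n : ℕ) (φ : ℝ → ℝ → ℝ) (x t : ℝ) : ℝ := iteratedDeriv n (fun y => φ y t) x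

/-- partial derivative in the second (time) variable. -/
def dt1 (φ : ℝ → ℝ → ℝ) (x t : ℝ) : ℝ := deriv (fun τ => φ x τ) t

/-- Japanese bracket `⟨y⟩ = √(1+y²)`. -/
def jb (y : ℝ) : ℝ := Real.sqrt (1 + y ^ 2)

/-- One-sided Japanese bracket `⟨y⟩₊`. -/
def jbp (y : ℝ) : ℝ := if 0 ≤ y then Real.sqrt (1 + y ^ 2) else 1

/-- A viscous shock profile for `u_t + f(u)_x = (u^{m-1} u_x)_x` with speed `s`. -/
def IsShockProfile (m um s : ℝ) (f U : ℝ → ℝ) : Prop :=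
  ContDiff ℝ (⊤ : ℕ∞) U ∧ (∀ z, 0 < U z ∧ U z < um) ∧
  (∀ z, deriv U z = U z ^ (1 - m) * (f (U z) - s * U z)) ∧
  Tendsto U atBot (nhds um) ∧ Tendsto U atTop (nhds 0)

namespace ShockAux

def G1 (a : ℝ) (h : ℝ → ℝ) (u : ℝ) : ℝ :=
  a * (u ^ (a-1) * h u) + u ^ a * deriv h u

def G2 (a : ℝ) (h : ℝ → ℝ) (u : ℝ) : ℝ :=
  (a*(a-1)) * (u ^ (a-2) * h u) + (2*a) * (u ^ (a-1) * deriv h u)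
    + u ^ a * deriv (deriv h) u

def G3 (a : ℝ) (h : ℝ → ℝ) (u : ℝ) : ℝ :=
  (a*(a-1)*(a-2)) * (u ^ (a-3) * h u) + (3*(a*(a-1))) * (u ^ (a-2) * deriv h u)
    + (3*a) * (u ^ (a-1) * deriv (deriv h) u) + u ^ a * deriv (deriv (deriv h)) u

lemma hasDerivAt_G0 (a : ℝ) (h : ℝ → ℝ) (hh : ContDiff ℝ (⊤:ℕ∞) h) {u : ℝ} (hu : 0 < u) :
    HasDerivAt (fun x => x ^ a * h x) (G1 a h u) u := by
  have h1 : HasDerivAt (fun x : ℝ => x ^ a) (a * u ^ (a-1)) u :=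
    Real.hasDerivAt_rpow_const (Or.inl hu.ne')
  have h2 : HasDerivAt h (deriv h u) u :=
    (hh.differentiable (by simp) u).hasDerivAt
  have := h1.mul h2
  have e : a * u ^ (a-1) * h u + u ^ a * deriv h u = G1 a h u := by rw [G1]; ring
  exact e ▸ this

lemma contDiff_deriv (h : ℝ → ℝ) (hh : ContDiff ℝ (⊤:ℕ∞) h) : ContDiff ℝ (⊤:ℕ∞) (deriv h) :=
  (contDiff_infty_iff_deriv.mp hh).2

lemma hasDerivAt_G1 (a : ℝ) (h : ℝ → ℝ) (hh : ContDiff ℝ (⊤:ℕ∞) h) {u : ℝ} (hu : 0 < u) :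
    HasDerivAt (G1 a h) (G2 a h u) u := by
  have hh' := contDiff_deriv h hh
  have t1 : HasDerivAt (fun x : ℝ => a * (x ^ (a-1) * h x)) (a * G1 (a-1) h u) u :=
    (hasDerivAt_G0 (a-1) h hh hu).const_mul a
  have t2 : HasDerivAt (fun x : ℝ => x ^ a * deriv h x) (G1 a (deriv h) u) u :=
    hasDerivAt_G0 a (deriv h) hh' hu
  have sum := t1.add t2
  have e : a * G1 (a-1) h u + G1 a (deriv h) u = G2 a h u := by
    rw [G1, G1, G2, show a-1-1 = a-2 from by ring]; ring
  exact e ▸ sum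

lemma hasDerivAt_G2 (a : ℝ) (h : ℝ → ℝ) (hh : ContDiff ℝ (⊤:ℕ∞) h) {u : ℝ} (hu : 0 < u) :
    HasDerivAt (G2 a h) (G3 a h u) u := by
  have hh' := contDiff_deriv h hh
  have hh'' := contDiff_deriv _ hh'
  have t1 : HasDerivAt (fun x : ℝ => (a*(a-1)) * (x ^ (a-2) * h x)) ((a*(a-1)) * G1 (a-2) h u) u :=
    (hasDerivAt_G0 (a-2) h hh hu).const_mul (a*(a-1))
  have t2 : HasDerivAt (fun x : ℝ => (2*a) * (x ^ (a-1) * deriv h x)) ((2*a) * G1 (a-1) (deriv h) u) u :=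
    (hasDerivAt_G0 (a-1) (deriv h) hh' hu).const_mul (2*a)
  have t3 : HasDerivAt (fun x : ℝ => x ^ a * deriv (deriv h) x) (G1 a (deriv (deriv h)) u) u :=
    hasDerivAt_G0 a (deriv (deriv h)) hh'' hu
  have sum := (t1.add t2).add t3
  have e : (a*(a-1)) * G1 (a-2) h u + (2*a) * G1 (a-1) (deriv h) u + G1 a (deriv (deriv h)) u
      = G3 a h u := by
    rw [G1, G1, G1, G3, show a-2-1 = a-3 from by ring, show a-1-1 = a-2 from by ring]; ring
  exact e ▸ sum

def E1f (a : ℝ) (h U : ℝ → ℝ) (z : ℝ) : ℝ := U z ^ a * h (U z)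
def E2f (a : ℝ) (h U : ℝ → ℝ) (z : ℝ) : ℝ := G1 a h (U z) * E1f a h U z
def E3f (a : ℝ) (h U : ℝ → ℝ) (z : ℝ) : ℝ :=
  G2 a h (U z) * (E1f a h U z)^2 + G1 a h (U z) * E2f a h U z
def E4f (a : ℝ) (h U : ℝ → ℝ) (z : ℝ) : ℝ :=
  G3 a h (U z) * (E1f a h U z)^3 + 3 * G2 a h (U z) * E1f a h U z * E2f a h U z
    + G1 a h (U z) * E3f a h U z

variable {a : ℝ} {h U : ℝ → ℝ}

lemma hasDerivAt_U (hU : ContDiff ℝ (⊤:ℕ∞) U) (hODE : ∀ z, deriv U z = E1f a h U z) (z : ℝ) :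
    HasDerivAt U (E1f a h U z) z :=
  (hODE z) ▸ (hU.differentiable (by simp) z).hasDerivAt

lemma hasDerivAt_E1 (hh : ContDiff ℝ (⊤:ℕ∞) h) (hU : ContDiff ℝ (⊤:ℕ∞) U)
    (hpos : ∀ z, 0 < U z) (hODE : ∀ z, deriv U z = E1f a h U z) (z : ℝ) :
    HasDerivAt (E1f a h U) (E2f a h U z) z :=
  (hasDerivAt_G0 a h hh (hpos z)).comp z (hasDerivAt_U hU hODE z)

lemma hasDerivAt_E2 (hh : ContDiff ℝ (⊤:ℕ∞) h) (hU : ContDiff ℝ (⊤:ℕ∞) U)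
    (hpos : ∀ z, 0 < U z) (hODE : ∀ z, deriv U z = E1f a h U z) (z : ℝ) :
    HasDerivAt (E2f a h U) (E3f a h U z) z := by
  have w1 : HasDerivAt (fun z => G1 a h (U z)) (G2 a h (U z) * E1f a h U z) z :=
    (hasDerivAt_G1 a h hh (hpos z)).comp z (hasDerivAt_U hU hODE z)
  have := w1.mul (hasDerivAt_E1 hh hU hpos hODE z)
  have e : G2 a h (U z) * E1f a h U z * E1f a h U z + G1 a h (U z) * E2f a h U z
      = E3f a h U z := by rw [E3f]; ring
  exact e ▸ this

lemma hasDerivAt_E3 (hh : ContDiff ℝ (⊤:ℕ∞) h) (hU : ContDiff ℝ (⊤:ℕ∞) U)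
    (hpos : ∀ z, 0 < U z) (hODE : ∀ z, deriv U z = E1f a h U z) (z : ℝ) :
    HasDerivAt (E3f a h U) (E4f a h U z) z := by
  have w2 : HasDerivAt (fun z => G2 a h (U z)) (G3 a h (U z) * E1f a h U z) z :=
    (hasDerivAt_G2 a h hh (hpos z)).comp z (hasDerivAt_U hU hODE z)
  have w1 : HasDerivAt (fun z => G1 a h (U z)) (G2 a h (U z) * E1f a h U z) z :=
    (hasDerivAt_G1 a h hh (hpos z)).comp z (hasDerivAt_U hU hODE z)
  have hsq : HasDerivAt (fun z => (E1f a h U z)^2)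
      (2 * E1f a h U z ^ 1 * E2f a h U z) z := by
    simpa using (hasDerivAt_E1 hh hU hpos hODE z).fun_pow 2
  have := (w2.mul hsq).add (w1.mul (hasDerivAt_E2 hh hU hpos hODE z))
  have e : (G3 a h (U z) * E1f a h U z * (E1f a h U z)^2
        + G2 a h (U z) * (2 * E1f a h U z ^ 1 * E2f a h U z))
      + (G2 a h (U z) * E1f a h U z * E2f a h U z + G1 a h (U z) * E3f a h U z)
      = E4f a h U z := by rw [E4f, E2f, E3f]; ring
  exact e ▸ this

lemma iteratedDeriv_eq_E (hh : ContDiff ℝ (⊤:ℕ∞) h) (hU : ContDiff ℝ (⊤:ℕ∞) U)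
    (hpos : ∀ z, 0 < U z) (hODE : ∀ z, deriv U z = E1f a h U z) :
    (∀ z, iteratedDeriv 2 U z = E2f a h U z) ∧
    (∀ z, iteratedDeriv 3 U z = E3f a h U z) ∧
    (∀ z, iteratedDeriv 4 U z = E4f a h U z) := by
  have d1 : deriv U = E1f a h U := funext hODE
  have h2 : ∀ z, iteratedDeriv 2 U z = E2f a h U z := by
    intro z
    rw [iteratedDeriv_succ, iteratedDeriv_one, d1]
    exact (hasDerivAt_E1 hh hU hpos hODE z).deriv
  have h3 : ∀ z, iteratedDeriv 3 U z = E3f a h U z := by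
    intro z
    rw [iteratedDeriv_succ, funext h2]
    exact (hasDerivAt_E2 hh hU hpos hODE z).deriv
  have h4 : ∀ z, iteratedDeriv 4 U z = E4f a h U z := by
    intro z
    rw [iteratedDeriv_succ, funext h3]
    exact (hasDerivAt_E3 hh hU hpos hODE z).deriv
  exact ⟨h2, h3, h4⟩

lemma rpow_mul_self {u : ℝ} (hu : 0 < u) (p q : ℝ) (hpq : p + 1 = q) :
    u ^ p * u = u ^ q := by
  calc u ^ p * u = u ^ p * u ^ (1:ℝ) := by rw [Real.rpow_one]
    _ = u ^ (p+1) := (Real.rpow_add hu p 1).symm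
    _ = u ^ q := by rw [hpq]

set_option maxHeartbeats 2000000 in
lemma G_bounds {a M B u : ℝ} (h : ℝ → ℝ)
    (ha0 : 0 < a) (ha1 : a ≤ 1) (hu : 0 < u) (huB : u ≤ B) (hB : 1 ≤ B) (hM : 1 ≤ M)
    (Hh : |h u| ≤ M * u) (H1 : |deriv h u| ≤ M) (H2 : |deriv (deriv h) u| ≤ M)
    (H3 : |deriv (deriv (deriv h)) u| ≤ M) :
    |u ^ a * h u| ≤ M * u ^ (a+1) ∧ |G1 a h u| ≤ 2*M*u^a ∧
    |G2 a h u| ≤ 4*M*B*u^(a-1) ∧ |G3 a h u| ≤ 9*M*B^2*u^(a-2) := by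
  have pa : (0:ℝ) < u ^ a := Real.rpow_pos_of_pos hu a
  have pa1 : (0:ℝ) < u ^ (a-1) := Real.rpow_pos_of_pos hu (a-1)
  have pa2 : (0:ℝ) < u ^ (a-2) := Real.rpow_pos_of_pos hu (a-2)
  have pa3 : (0:ℝ) < u ^ (a-3) := Real.rpow_pos_of_pos hu (a-3)
  have e3 : u ^ (a-3) * u = u ^ (a-2) := rpow_mul_self hu _ _ (by ring)
  have e2 : u ^ (a-2) * u = u ^ (a-1) := rpow_mul_self hu _ _ (by ring)
  have e1 : u ^ (a-1) * u = u ^ a := rpow_mul_self hu _ _ (by ring)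
  have e0 : u ^ a * u = u ^ (a+1) := rpow_mul_self hu _ _ (by ring)
  have hM0 : (0:ℝ) ≤ M := by linarith
  have hB0 : (0:ℝ) ≤ B := by linarith
  have hBsq : B ≤ B^2 := by nlinarith
  have hBsq1 : (1:ℝ) ≤ B^2 := by nlinarith
  have c1 : u ^ a ≤ B * u ^ (a-1) := by
    rw [← e1]
    calc u ^ (a-1) * u ≤ u ^ (a-1) * B := by gcongr
      _ = B * u ^ (a-1) := by ring
  have c2 : u ^ (a-1) ≤ B * u ^ (a-2) := by
    rw [← e2]
    calc u ^ (a-2) * u ≤ u ^ (a-2) * B := by gcongr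
      _ = B * u ^ (a-2) := by ring
  have c3 : u ^ a ≤ B^2 * u ^ (a-2) := by
    calc u ^ a ≤ B * u ^ (a-1) := c1
      _ ≤ B * (B * u ^ (a-2)) := by gcongr
      _ = B^2 * u ^ (a-2) := by ring
  have hMua2 : (0:ℝ) ≤ M * u ^ (a-2) := mul_nonneg hM0 pa2.le
  have hMua1 : (0:ℝ) ≤ M * u ^ (a-1) := mul_nonneg hM0 pa1.le
  have hMua : (0:ℝ) ≤ M * u ^ a := mul_nonneg hM0 pa.le
  have habs1 : |a| = a := abs_of_pos ha0
  have hab : |a*(a-1)| ≤ 1 := by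
    rw [abs_mul, habs1, abs_of_nonpos (by linarith : a - 1 ≤ 0)]
    nlinarith
  have hab3 : |a*(a-1)*(a-2)| ≤ 2 := by
    rw [abs_mul, abs_mul, habs1, abs_of_nonpos (by linarith : a - 1 ≤ 0),
      abs_of_nonpos (by linarith : a - 2 ≤ 0)]
    have h14 : a*(1-a) ≤ 1/4 := by nlinarith [sq_nonneg (a-1/2)]
    nlinarith [mul_le_mul h14 (show (2:ℝ)-a ≤ 2 by linarith) (by linarith) (by norm_num)]
  have T3 : |u ^ (a-3) * h u| ≤ M * u ^ (a-2) := by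
    calc |u ^ (a-3) * h u| = u ^ (a-3) * |h u| := by rw [abs_mul, abs_of_pos pa3]
      _ ≤ u ^ (a-3) * (M * u) := by gcongr
      _ = M * (u ^ (a-3) * u) := by ring
      _ = M * u ^ (a-2) := by rw [e3]
  have T2 : |u ^ (a-2) * h u| ≤ M * u ^ (a-1) := by
    calc |u ^ (a-2) * h u| = u ^ (a-2) * |h u| := by rw [abs_mul, abs_of_pos pa2]
      _ ≤ u ^ (a-2) * (M * u) := by gcongr
      _ = M * (u ^ (a-2) * u) := by ring
      _ = M * u ^ (a-1) := by rw [e2]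
  have T1 : |u ^ (a-1) * h u| ≤ M * u ^ a := by
    calc |u ^ (a-1) * h u| = u ^ (a-1) * |h u| := by rw [abs_mul, abs_of_pos pa1]
      _ ≤ u ^ (a-1) * (M * u) := by gcongr
      _ = M * (u ^ (a-1) * u) := by ring
      _ = M * u ^ a := by rw [e1]
  have T0 : |u ^ a * h u| ≤ M * u ^ (a+1) := by
    calc |u ^ a * h u| = u ^ a * |h u| := by rw [abs_mul, abs_of_pos pa]
      _ ≤ u ^ a * (M * u) := by gcongr
      _ = M * (u ^ a * u) := by ring
      _ = M * u ^ (a+1) := by rw [e0]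
  have S2 : |u ^ (a-2) * deriv h u| ≤ M * u ^ (a-2) := by
    calc |u ^ (a-2) * deriv h u| = u ^ (a-2) * |deriv h u| := by rw [abs_mul, abs_of_pos pa2]
      _ ≤ u ^ (a-2) * M := by gcongr
      _ = M * u ^ (a-2) := by ring
  have S1 : |u ^ (a-1) * deriv h u| ≤ M * u ^ (a-1) := by
    calc |u ^ (a-1) * deriv h u| = u ^ (a-1) * |deriv h u| := by rw [abs_mul, abs_of_pos pa1]
      _ ≤ u ^ (a-1) * M := by gcongr
      _ = M * u ^ (a-1) := by ring
  have R1 : |u ^ (a-1) * deriv (deriv h) u| ≤ M * u ^ (a-1) := by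
    calc |u ^ (a-1) * deriv (deriv h) u| = u ^ (a-1) * |deriv (deriv h) u| := by
          rw [abs_mul, abs_of_pos pa1]
      _ ≤ u ^ (a-1) * M := by gcongr
      _ = M * u ^ (a-1) := by ring
  have R0 : |u ^ a * deriv (deriv h) u| ≤ M * u ^ a := by
    calc |u ^ a * deriv (deriv h) u| = u ^ a * |deriv (deriv h) u| := by
          rw [abs_mul, abs_of_pos pa]
      _ ≤ u ^ a * M := by gcongr
      _ = M * u ^ a := by ring
  have Q0 : |u ^ a * deriv (deriv (deriv h)) u| ≤ M * u ^ a := by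
    calc |u ^ a * deriv (deriv (deriv h)) u| = u ^ a * |deriv (deriv (deriv h)) u| := by
          rw [abs_mul, abs_of_pos pa]
      _ ≤ u ^ a * M := by gcongr
      _ = M * u ^ a := by ring
  have S0 : |u ^ a * deriv h u| ≤ M * u ^ a := by
    calc |u ^ a * deriv h u| = u ^ a * |deriv h u| := by rw [abs_mul, abs_of_pos pa]
      _ ≤ u ^ a * M := by gcongr
      _ = M * u ^ a := by ring
  refine ⟨T0, ?_, ?_, ?_⟩
  · -- G1 bound
    have k1 : |a * (u ^ (a-1) * h u)| ≤ M * u ^ a := by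
      rw [abs_mul, habs1]
      calc a * |u ^ (a-1) * h u| ≤ 1 * (M * u ^ a) :=
            mul_le_mul ha1 T1 (abs_nonneg _) one_pos.le
        _ = M * u ^ a := by ring
    have := (abs_add_le (a * (u ^ (a-1) * h u)) (u ^ a * deriv h u)).trans (add_le_add k1 S0)
    calc |G1 a h u| ≤ M * u ^ a + M * u ^ a := this
      _ = 2*M*u^a := by ring
  · -- G2 bound
    have k1 : |(a*(a-1)) * (u ^ (a-2) * h u)| ≤ M * u ^ (a-1) := by
      rw [abs_mul]
      calc |a*(a-1)| * |u ^ (a-2) * h u| ≤ 1 * (M * u ^ (a-1)) :=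
            mul_le_mul hab T2 (abs_nonneg _) one_pos.le
        _ = M * u ^ (a-1) := by ring
    have k2 : |(2*a) * (u ^ (a-1) * deriv h u)| ≤ 2 * (M * u ^ (a-1)) := by
      rw [abs_mul, abs_of_pos (by linarith : (0:ℝ) < 2*a)]
      exact mul_le_mul (by linarith) S1 (abs_nonneg _) (by norm_num)
    have k3 : |u ^ a * deriv (deriv h) u| ≤ B * (M * u ^ (a-1)) := by
      calc |u ^ a * deriv (deriv h) u| = u ^ a * |deriv (deriv h) u| := by
            rw [abs_mul, abs_of_pos pa]
        _ ≤ (B * u ^ (a-1)) * M := mul_le_mul c1 H2 (abs_nonneg _) (by positivity)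
        _ = B * (M * u ^ (a-1)) := by ring
    have tri : |G2 a h u| ≤ |(a*(a-1)) * (u ^ (a-2) * h u)|
        + |(2*a) * (u ^ (a-1) * deriv h u)| + |u ^ a * deriv (deriv h) u| :=
      (abs_add_le _ _).trans (add_le_add (abs_add_le _ _) le_rfl)
    have : |G2 a h u| ≤ M * u ^ (a-1) + 2 * (M * u ^ (a-1)) + B * (M * u ^ (a-1)) :=
      tri.trans (add_le_add (add_le_add k1 k2) k3)
    refine this.trans ?_
    calc M * u ^ (a-1) + 2 * (M * u ^ (a-1)) + B * (M * u ^ (a-1))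
        = (3 + B) * (M * u ^ (a-1)) := by ring
      _ ≤ (4*B) * (M * u ^ (a-1)) := mul_le_mul_of_nonneg_right (by linarith) hMua1
      _ = 4*M*B*u^(a-1) := by ring
  · -- G3 bound
    have k1 : |(a*(a-1)*(a-2)) * (u ^ (a-3) * h u)| ≤ 2 * (M * u ^ (a-2)) := by
      rw [abs_mul]
      exact mul_le_mul hab3 T3 (abs_nonneg _) (by norm_num)
    have k2 : |(3*(a*(a-1))) * (u ^ (a-2) * deriv h u)| ≤ 3 * (M * u ^ (a-2)) := by
      rw [abs_mul, abs_mul, abs_of_pos (by norm_num : (0:ℝ) < 3)]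
      calc 3 * |a*(a-1)| * |u ^ (a-2) * deriv h u| ≤ 3 * 1 * (M * u ^ (a-2)) := by
            apply mul_le_mul _ S2 (abs_nonneg _) (by norm_num)
            linarith [hab, abs_nonneg (a*(a-1))]
        _ = 3 * (M * u ^ (a-2)) := by ring
    have k3 : |(3*a) * (u ^ (a-1) * deriv (deriv h) u)| ≤ 3 * (B * (M * u ^ (a-2))) := by
      rw [abs_mul, abs_of_pos (by linarith : (0:ℝ) < 3*a)]
      calc (3*a) * |u ^ (a-1) * deriv (deriv h) u| ≤ 3 * (M * u ^ (a-1)) :=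
            mul_le_mul (by linarith) R1 (abs_nonneg _) (by norm_num)
        _ ≤ 3 * (M * (B * u ^ (a-2))) :=
            mul_le_mul_of_nonneg_left (mul_le_mul_of_nonneg_left c2 hM0) (by norm_num)
        _ = 3 * (B * (M * u ^ (a-2))) := by ring
    have k4 : |u ^ a * deriv (deriv (deriv h)) u| ≤ B^2 * (M * u ^ (a-2)) := by
      calc |u ^ a * deriv (deriv (deriv h)) u| = u ^ a * |deriv (deriv (deriv h)) u| := by
            rw [abs_mul, abs_of_pos pa]
        _ ≤ (B^2 * u ^ (a-2)) * M := mul_le_mul c3 H3 (abs_nonneg _) (by positivity)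
        _ = B^2 * (M * u ^ (a-2)) := by ring
    have tri : |G3 a h u| ≤ |(a*(a-1)*(a-2)) * (u ^ (a-3) * h u)|
        + |(3*(a*(a-1))) * (u ^ (a-2) * deriv h u)|
        + |(3*a) * (u ^ (a-1) * deriv (deriv h) u)|
        + |u ^ a * deriv (deriv (deriv h)) u| := by
      exact (abs_add_le _ _).trans (add_le_add ((abs_add_le _ _).trans
        (add_le_add (abs_add_le _ _) le_rfl)) le_rfl)
    have : |G3 a h u| ≤ 2 * (M * u ^ (a-2)) + 3 * (M * u ^ (a-2))
        + 3 * (B * (M * u ^ (a-2))) + B^2 * (M * u ^ (a-2)) :=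
      tri.trans (add_le_add (add_le_add (add_le_add k1 k2) k3) k4)
    refine this.trans ?_
    calc 2 * (M * u ^ (a-2)) + 3 * (M * u ^ (a-2)) + 3 * (B * (M * u ^ (a-2)))
          + B^2 * (M * u ^ (a-2))
        = (5 + 3*B + B^2) * (M * u ^ (a-2)) := by ring
      _ ≤ (9*B^2) * (M * u ^ (a-2)) := mul_le_mul_of_nonneg_right (by nlinarith) hMua2
      _ = 9*M*B^2*u^(a-2) := by ring

set_option maxHeartbeats 2000000 in
lemma combine {A M B u g1 g2 g3 e1 e2 e3 e4 : ℝ}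
    (hu : 0 < u) (hM : 1 ≤ M) (hB : 1 ≤ B)
    (he1 : |e1| ≤ M * u ^ (A+1))
    (hg1 : |g1| ≤ 2*M*u^A) (hg2 : |g2| ≤ 4*M*B*u^(A-1)) (hg3 : |g3| ≤ 9*M*B^2*u^(A-2))
    (he2 : e2 = g1 * e1) (he3 : e3 = g2*e1^2 + g1*e2)
    (he4 : e4 = g3*e1^3 + 3*g2*e1*e2 + g1*e3) :
    |e2| ≤ 2*M^2 * u^(2*A+1) ∧ |e3| ≤ 8*M^3*B * u^(3*A+1) ∧
    |e4| ≤ 49*M^4*B^2 * u^(4*A+1) := by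
  have hM0 : (0:ℝ) ≤ M := by linarith
  have hB0 : (0:ℝ) ≤ B := by linarith
  have P : ∀ p q : ℝ, u ^ p * u ^ q = u ^ (p+q) := fun p q => (Real.rpow_add hu p q).symm
  have pp : ∀ p : ℝ, (0:ℝ) < u ^ p := fun p => Real.rpow_pos_of_pos hu p
  have sq : (u^(A+1))^2 = u^(2*A+2) := by
    rw [← Real.rpow_natCast (u ^ (A+1)) 2, ← Real.rpow_mul hu.le]
    norm_num; ring_nf
  have cb : (u^(A+1))^3 = u^(3*A+3) := by
    rw [← Real.rpow_natCast (u ^ (A+1)) 3, ← Real.rpow_mul hu.le]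
    norm_num; ring_nf
  have b2 : |e2| ≤ 2*M^2 * u^(2*A+1) := by
    rw [he2, abs_mul]
    calc |g1| * |e1| ≤ (2*M*u^A) * (M * u ^ (A+1)) :=
          mul_le_mul hg1 he1 (abs_nonneg _) (by positivity)
      _ = 2*M^2 * (u^A * u^(A+1)) := by ring
      _ = 2*M^2 * u^(2*A+1) := by rw [P, show A + (A+1) = 2*A+1 from by ring]
  have b3 : |e3| ≤ 8*M^3*B * u^(3*A+1) := by
    rw [he3]
    have t1 : |g2*e1^2| ≤ 4*M^3*B * u^(3*A+1) := by
      rw [abs_mul, abs_pow]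
      calc |g2| * |e1|^2 ≤ (4*M*B*u^(A-1)) * (M * u ^ (A+1))^2 :=
            mul_le_mul hg2 (pow_le_pow_left₀ (abs_nonneg _) he1 2) (by positivity) (by positivity)
        _ = 4*M^3*B * (u^(A-1) * (u^(A+1))^2) := by ring
        _ = 4*M^3*B * (u^(A-1) * u^(2*A+2)) := by rw [sq]
        _ = 4*M^3*B * u^(3*A+1) := by rw [P, show A-1 + (2*A+2) = 3*A+1 from by ring]
    have t2 : |g1*e2| ≤ 4*M^3 * u^(3*A+1) := by
      rw [abs_mul]
      calc |g1| * |e2| ≤ (2*M*u^A) * (2*M^2 * u^(2*A+1)) :=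
            mul_le_mul hg1 b2 (abs_nonneg _) (by positivity)
        _ = 4*M^3 * (u^A * u^(2*A+1)) := by ring
        _ = 4*M^3 * u^(3*A+1) := by rw [P, show A + (2*A+1) = 3*A+1 from by ring]
    calc |g2*e1^2 + g1*e2| ≤ |g2*e1^2| + |g1*e2| := abs_add_le _ _
      _ ≤ 4*M^3*B * u^(3*A+1) + 4*M^3 * u^(3*A+1) := add_le_add t1 t2
      _ ≤ 8*M^3*B * u^(3*A+1) := by
          have h1 : 4*M^3 * u^(3*A+1) ≤ 4*M^3*B * u^(3*A+1) := by
            have : (4:ℝ)*M^3 ≤ 4*M^3*B := by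
              nlinarith [mul_nonneg (pow_nonneg hM0 3) (sub_nonneg.2 hB)]
            exact mul_le_mul_of_nonneg_right this (pp _).le
          linarith
  have b4 : |e4| ≤ 49*M^4*B^2 * u^(4*A+1) := by
    rw [he4]
    have t1 : |g3*e1^3| ≤ 9*M^4*B^2 * u^(4*A+1) := by
      rw [abs_mul, abs_pow]
      calc |g3| * |e1|^3 ≤ (9*M*B^2*u^(A-2)) * (M * u ^ (A+1))^3 :=
            mul_le_mul hg3 (pow_le_pow_left₀ (abs_nonneg _) he1 3) (by positivity) (by positivity)
        _ = 9*M^4*B^2 * (u^(A-2) * (u^(A+1))^3) := by ring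
        _ = 9*M^4*B^2 * (u^(A-2) * u^(3*A+3)) := by rw [cb]
        _ = 9*M^4*B^2 * u^(4*A+1) := by rw [P, show A-2 + (3*A+3) = 4*A+1 from by ring]
    have t2 : |3*g2*e1*e2| ≤ 24*M^4*B * u^(4*A+1) := by
      rw [abs_mul, abs_mul, abs_mul]
      rw [abs_of_pos (by norm_num : (0:ℝ) < 3)]
      calc 3 * |g2| * |e1| * |e2|
          ≤ 3 * (4*M*B*u^(A-1)) * (M * u ^ (A+1)) * (2*M^2 * u^(2*A+1)) := by
            have s1 : 3 * |g2| ≤ 3 * (4*M*B*u^(A-1)) := by linarith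
            have s2 : 3 * |g2| * |e1| ≤ 3 * (4*M*B*u^(A-1)) * (M * u ^ (A+1)) :=
              mul_le_mul s1 he1 (abs_nonneg _) (by positivity)
            exact mul_le_mul s2 b2 (abs_nonneg _) (by positivity)
        _ = 24*M^4*B * (u^(A-1) * u^(A+1) * u^(2*A+1)) := by ring
        _ = 24*M^4*B * u^(4*A+1) := by
            rw [P, P, show A-1 + (A+1) + (2*A+1) = 4*A+1 from by ring]
    have t3 : |g1*e3| ≤ 16*M^4*B * u^(4*A+1) := by
      rw [abs_mul]
      calc |g1| * |e3| ≤ (2*M*u^A) * (8*M^3*B * u^(3*A+1)) :=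
            mul_le_mul hg1 b3 (abs_nonneg _) (by positivity)
        _ = 16*M^4*B * (u^A * u^(3*A+1)) := by ring
        _ = 16*M^4*B * u^(4*A+1) := by rw [P, show A + (3*A+1) = 4*A+1 from by ring]
    calc |g3*e1^3 + 3*g2*e1*e2 + g1*e3|
        ≤ |g3*e1^3| + |3*g2*e1*e2| + |g1*e3| :=
          (abs_add_le _ _).trans (add_le_add (abs_add_le _ _) le_rfl)
      _ ≤ 9*M^4*B^2 * u^(4*A+1) + 24*M^4*B * u^(4*A+1) + 16*M^4*B * u^(4*A+1) :=
          add_le_add (add_le_add t1 t2) t3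
      _ ≤ 49*M^4*B^2 * u^(4*A+1) := by
          have key : (9*B^2 + 24*B + 16*B) * (M^4 * u^(4*A+1)) ≤ (49*B^2) * (M^4 * u^(4*A+1)) := by
            apply mul_le_mul_of_nonneg_right _ (by positivity)
            nlinarith [mul_nonneg hB0 (sub_nonneg.2 hB)]
          linarith [key]
  exact ⟨b2, b3, b4⟩

end ShockAux

set_option maxHeartbeats 2000000 in
/-- Second derivative identity and pointwise derivative bounds for the shock profile. -/
theorem shock_profile_derivative_bounds
    (m um s : ℝ) (f U : ℝ → ℝ)
    (hm1 : 0 < m) (hm2 : m < 1)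
    (hf : ContDiff ℝ (⊤ : ℕ∞) f) (hconv : ConvexOn ℝ Set.univ f) (hf0 : f 0 = 0)
    (hum : 0 < um) (hRH : s = f um / um)
    (hU : IsShockProfile m um s f U) :
    (∀ z, iteratedDeriv 2 U z
        = (1 - m) * (deriv U z) ^ 2 / U z
          + (deriv f (U z) - s) * U z ^ (1 - m) * deriv U z) ∧
    ∃ C > (0:ℝ), ∀ z,
      |deriv U z| ≤ C * U z ^ (2 - m) ∧
      |iteratedDeriv 2 U z| ≤ C * U z ^ (3 - 2 * m) ∧
      |iteratedDeriv 3 U z| ≤ C * U z ^ (4 - 3 * m) ∧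
      |iteratedDeriv 4 U z| ≤ C * U z ^ (5 - 4 * m) := by
  obtain ⟨hUsm, hUpos, hODE, -, -⟩ := hU
  have hpos : ∀ z, 0 < U z := fun z => (hUpos z).1
  have hhC : ContDiff ℝ (⊤:ℕ∞) (fun u => f u - s * u) :=
    hf.sub (contDiff_const.mul contDiff_id)
  have hODE' : ∀ z, deriv U z = ShockAux.E1f (1-m) (fun u => f u - s * u) U z := by
    intro z; rw [hODE z]; rfl
  obtain ⟨h2, h3, h4⟩ := ShockAux.iteratedDeriv_eq_E hhC hUsm hpos hODE'
  have hdh : ∀ u, deriv (fun u => f u - s * u) u = deriv f u - s := by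
    intro u
    have h1 : HasDerivAt (fun u => f u - s * u) (deriv f u - s) u := by
      have := ((hf.differentiable (by simp) u).hasDerivAt).fun_sub
        ((hasDerivAt_id u).const_mul s)
      simpa using this
    exact h1.deriv
  constructor
  · -- the second-derivative identity
    intro z
    have hu : (0:ℝ) < U z := hpos z
    rw [h2 z]
    simp only [ShockAux.E2f, ShockAux.E1f, ShockAux.G1, hdh]
    rw [hODE z]
    have hr : U z ^ ((1-m)-1) = U z ^ (1-m) / U z := by
      rw [Real.rpow_sub hu, Real.rpow_one]
    rw [hr]
    field_simp
  · -- the bounds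
    have hcomp := isCompact_Icc (a := (0:ℝ)) (b := um)
    obtain ⟨M0, hM0⟩ := hcomp.exists_bound_of_continuousOn hhC.continuous.continuousOn
    obtain ⟨M1, hM1⟩ := hcomp.exists_bound_of_continuousOn
      (ShockAux.contDiff_deriv _ hhC).continuous.continuousOn
    obtain ⟨M2, hM2⟩ := hcomp.exists_bound_of_continuousOn
      (ShockAux.contDiff_deriv _ (ShockAux.contDiff_deriv _ hhC)).continuous.continuousOn
    obtain ⟨M3, hM3⟩ := hcomp.exists_bound_of_continuousOn
      (ShockAux.contDiff_deriv _ (ShockAux.contDiff_deriv _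
        (ShockAux.contDiff_deriv _ hhC))).continuous.continuousOn
    set M : ℝ := max 1 (max (max M0 M1) (max M2 M3)) with hMdef
    have hM1' : (1:ℝ) ≤ M := le_max_left _ _
    have hM0' : (0:ℝ) ≤ M := by linarith
    have bd1 : ∀ x ∈ Icc (0:ℝ) um, |deriv (fun u => f u - s * u) x| ≤ M := by
      intro x hx
      refine le_trans (by simpa [Real.norm_eq_abs] using hM1 x hx) ?_
      exact le_trans (le_max_right M0 M1) (le_trans (le_max_left _ _) (le_max_right 1 _))
    have bd2 : ∀ x ∈ Icc (0:ℝ) um, |deriv (deriv (fun u => f u - s * u)) x| ≤ M := by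
      intro x hx
      refine le_trans (by simpa [Real.norm_eq_abs] using hM2 x hx) ?_
      exact le_trans (le_max_left M2 M3) (le_trans (le_max_right _ _) (le_max_right 1 _))
    have bd3 : ∀ x ∈ Icc (0:ℝ) um, |deriv (deriv (deriv (fun u => f u - s * u))) x| ≤ M := by
      intro x hx
      refine le_trans (by simpa [Real.norm_eq_abs] using hM3 x hx) ?_
      exact le_trans (le_max_right M2 M3) (le_trans (le_max_right _ _) (le_max_right 1 _))
    have hLip : ∀ x ∈ Icc (0:ℝ) um, |(fun u => f u - s * u) x| ≤ M * x := by
      intro x hx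
      have key := norm_image_sub_le_of_norm_deriv_le_segment'
        (f := fun u => f u - s*u) (a := 0) (b := um) (f' := deriv (fun u => f u - s*u))
        (fun y _ => (hhC.differentiable (by simp) y).hasDerivAt.hasDerivWithinAt)
        (fun y hy => by
          rw [Real.norm_eq_abs]; exact bd1 y (Ico_subset_Icc_self hy))
        x hx
      simpa [Real.norm_eq_abs, hf0] using key
    set B : ℝ := max um 1 with hBdef
    have hB1 : (1:ℝ) ≤ B := le_max_right _ _
    refine ⟨49 * M^4 * B^2, by positivity, fun z => ?_⟩
    have hu : (0:ℝ) < U z := hpos z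
    have huB : U z ≤ B := le_trans (hUpos z).2.le (le_max_left _ _)
    have hxI : U z ∈ Icc (0:ℝ) um := ⟨hu.le, (hUpos z).2.le⟩
    obtain ⟨b0, b1, b2, b3⟩ := ShockAux.G_bounds (a := 1-m) (M := M) (B := B) (u := U z)
      (fun u => f u - s*u) (by linarith) (by linarith) hu huB hB1 hM1'
      (hLip _ hxI) (bd1 _ hxI) (bd2 _ hxI) (bd3 _ hxI)
    have hE1 : |ShockAux.E1f (1-m) (fun u => f u - s*u) U z| ≤ M * U z ^ ((1-m)+1) := b0
    obtain ⟨c2, c3, c4⟩ := ShockAux.combine (A := 1-m)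
      (e2 := ShockAux.E2f (1-m) (fun u => f u - s*u) U z)
      (e3 := ShockAux.E3f (1-m) (fun u => f u - s*u) U z)
      (e4 := ShockAux.E4f (1-m) (fun u => f u - s*u) U z)
      hu hM1' hB1 hE1 b1 b2 b3 rfl rfl rfl
    have hB0' : (0:ℝ) ≤ B := by linarith
    have hB2 : (1:ℝ) ≤ B^2 := by nlinarith
    have hM2' : (1:ℝ) ≤ M^2 := by nlinarith
    have hM4 : M ≤ M^4 := by nlinarith [pow_nonneg hM0' 2, pow_nonneg hM0' 3]
    have hMB : (1:ℝ) ≤ M*B := by nlinarith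
    have pB : (0:ℝ) ≤ M^4*(B^2-1) := mul_nonneg (pow_nonneg hM0' 4) (by linarith)
    have hCbig1 : M ≤ 49 * M^4 * B^2 := by nlinarith [hM4, pB, pow_nonneg hM0' 4]
    have hCbig2 : 2*M^2 ≤ 49 * M^4 * B^2 := by
      have q : (0:ℝ) ≤ M^2*(M^2-1) := mul_nonneg (sq_nonneg M) (by linarith)
      nlinarith [q, pB, sq_nonneg M]
    have hCbig3 : 8*M^3*B ≤ 49 * M^4 * B^2 := by
      have q : (0:ℝ) ≤ M^3*B*(M*B-1) :=
        mul_nonneg (mul_nonneg (pow_nonneg hM0' 3) hB0') (by linarith)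
      nlinarith [q, mul_nonneg (pow_nonneg hM0' 3) hB0']
    refine ⟨?_, ?_, ?_, ?_⟩
    · rw [hODE' z]
      refine hE1.trans ?_
      rw [show (1-m)+1 = 2-m from by ring]
      exact mul_le_mul_of_nonneg_right hCbig1 (Real.rpow_pos_of_pos hu _).le
    · rw [h2 z]
      refine c2.trans ?_
      rw [show 2*(1-m)+1 = 3-2*m from by ring]
      exact mul_le_mul_of_nonneg_right hCbig2 (Real.rpow_pos_of_pos hu _).le
    · rw [h3 z]
      refine c3.trans ?_
      rw [show 3*(1-m)+1 = 4-3*m from by ring]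
      exact mul_le_mul_of_nonneg_right hCbig3 (Real.rpow_pos_of_pos hu _).le
    · rw [h4 z]
      refine c4.trans ?_
      rw [show 4*(1-m)+1 = 5-4*m from by ring]

end
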